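/- Let a ∈ (−1, 0). For every n ≥ 1, the polynomial S_n(x) = (−i)^n R_n(ix) has exactly n real roots, all simple, and the roots of S_n and S_{n+1} strictly interlace. -/

import Mathlib

open Polynomial Complex

/-- The elephant polynomials over `ℂ` with real parameter `a`. -/
noncomputable def elephantRC (a : ℝ) : ℕ → Polynomial ℂ
  | 0 => 1
  | 1 => X
  | n + 2 => X * elephantRC a (n + 1) -
      C ((a : ℂ) / ((n : ℂ) + 1)) * ((1 - X ^ 2) * (elephantRC a (n + 1)).derivative)

/-- `S a n = (-i)^n * R_n (i x)`. -/
noncomputable def elephantS (a : ℝ) (n : ℕ) : Polynomial ℂ :=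
  C ((-Complex.I) ^ n) * (elephantRC a n).comp (C Complex.I * X)

/-!
Substituting `x ↦ i x` turns `S_n` into the real polynomial `T_n` with `T_0 = 1`, `T_1 = X` and
`T_{n+1} = X T_n + (a/n)(1 + X²) T_n'`, of degree `n` and leading coefficient `(a+1)^{n-1} > 0`.
If `T_n` has simple real roots `β_0 < ⋯ < β_{n-1}`, then `T_{n+1}(β_k) = (a/n)(1 + β_k²) T_n'(β_k)`;
as `T_n'` alternates in sign along its roots and `a < 0`, `T_{n+1}(β_k)` has the sign `(-1)^{n-k}`.
Together with the signs of `T_{n+1}` at `±∞` this gives `n + 1` sign changes, hence `n + 1` real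
roots interlacing the `β_k`, and these are all the roots since `deg T_{n+1} = n + 1`.
-/

open Finset Lagrange

theorem exists_zeros_of_alternating_sign {f : ℝ → ℝ} (hf : Continuous f) {m : ℕ}
    {δ : Fin (m + 1) → ℝ} (hδ : StrictMono δ)
    (hsign : ∀ j : Fin (m + 1), 0 < (-1) ^ (m - j : ℕ) * f (δ j)) :
    ∃ γ : Fin m → ℝ, StrictMono γ ∧
      ∀ k, f (γ k) = 0 ∧ γ k ∈ Set.Ioo (δ k.castSucc) (δ k.succ) := by
  have hzero : ∀ k : Fin m, ∃ x, f x = 0 ∧ x ∈ Set.Ioo (δ k.castSucc) (δ k.succ) := by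
    intro k
    set s : ℝ := (-1) ^ (m - 1 - k : ℕ)
    have hleft : s * f (δ k.castSucc) < 0 := by
      have h := hsign k.castSucc
      rw [Fin.val_castSucc, show m - k = m - 1 - k + 1 by omega, pow_succ] at h
      linarith
    have hright : 0 < s * f (δ k.succ) := by
      have h := hsign k.succ
      rwa [Fin.val_succ, show m - (k + 1) = m - 1 - k by omega] at h
    obtain ⟨x, hx, hfx⟩ := intermediate_value_Ioo (hδ k.castSucc_lt_succ).le
      (continuous_const.mul hf).continuousOn ⟨hleft, hright⟩
    exact ⟨x, (mul_eq_zero.1 hfx).resolve_left (by simp), hx⟩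
  choose γ hγ using hzero
  refine ⟨γ, fun i j hij => ?_, hγ⟩
  calc γ i < δ i.succ := (hγ i).2.2
    _ ≤ δ j.castSucc := hδ.monotone (Fin.succ_le_castSucc_iff.2 hij)
    _ < γ j := (hγ j).2.1

namespace Polynomial

theorem eq_C_leadingCoeff_mul_nodal {R : Type*} [CommRing R] [IsDomain R] {n : ℕ} {p : R[X]}
    (hp : p.natDegree = n) {v : Fin n → R} (hv : Function.Injective v)
    (hroot : ∀ k, p.IsRoot (v k)) : p = C p.leadingCoeff * nodal univ v := by
  rcases eq_or_ne p 0 with rfl | hp0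
  · simp
  have hlc : p.leadingCoeff ≠ 0 := leadingCoeff_ne_zero.2 hp0
  refine eq_of_degree_le_of_eval_index_eq univ hv.injOn ?_ ?_ ?_ fun k _ => ?_
  · simp [degree_eq_natDegree hp0, hp]
  · rw [degree_C_mul hlc, degree_nodal, degree_eq_natDegree hp0, hp, card_univ, Fintype.card_fin]
  · rw [leadingCoeff_mul, leadingCoeff_C, nodal_monic.leadingCoeff, mul_one]
  · rw [(hroot k).eq_zero, eval_mul, eval_nodal_at_node (mem_univ k), mul_zero]

theorem exists_eq_of_isRoot_of_injective {R : Type*} [CommRing R] [IsDomain R] {n : ℕ}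
    {p : R[X]} (hp : p.natDegree = n) (hp0 : p ≠ 0) {v : Fin n → R}
    (hv : Function.Injective v) (hroot : ∀ k, p.IsRoot (v k)) {z : R} (hz : p.IsRoot z) :
    ∃ k, z = v k := by
  rw [eq_C_leadingCoeff_mul_nodal hp hv hroot, IsRoot, eval_mul, eval_C, eval_nodal,
    mul_eq_zero, prod_eq_zero_iff] at hz
  obtain hz | ⟨k, -, hk⟩ := hz
  · exact absurd hz (leadingCoeff_ne_zero.2 hp0)
  · exact ⟨k, sub_eq_zero.1 hk⟩

theorem eval_derivative_ne_zero_of_injective {K : Type*} [Field K] {n : ℕ}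
    {p : K[X]} (hp : p.natDegree = n) (hp0 : p ≠ 0) {v : Fin n → K}
    (hv : Function.Injective v) (hroot : ∀ k, p.IsRoot (v k)) (k : Fin n) :
    p.derivative.eval (v k) ≠ 0 := by
  have hw := nodalWeight_ne_zero hv.injOn (mem_univ k)
  rw [nodalWeight_eq_eval_derivative_nodal (mem_univ k), ne_eq, inv_eq_zero] at hw
  rw [eq_C_leadingCoeff_mul_nodal hp hv hroot, derivative_C_mul, eval_mul, eval_C]
  exact mul_ne_zero (leadingCoeff_ne_zero.2 hp0) hw

theorem neg_one_pow_mul_eval_derivative_nodal_pos {n : ℕ} {β : Fin n → ℝ} (hβ : StrictMono β)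
    (k : Fin n) : 0 < (-1) ^ (n - 1 - k : ℕ) * (nodal univ β).derivative.eval (β k) := by
  have hsplit : univ.erase k = Iio k ∪ Ioi k := by
    ext j; simp [lt_or_lt_iff_ne]
  rw [eval_nodal_derivative_eval_node_eq (mem_univ k), eval_nodal, hsplit,
    prod_union (disjoint_left.2 fun j hj hj' => (mem_Iio.1 hj).asymm (mem_Ioi.1 hj')),
    ← Fin.card_Ioi, mul_left_comm, ← prod_neg]
  exact mul_pos (prod_pos fun j hj => sub_pos.2 (hβ (mem_Iio.1 hj)))
    (prod_pos fun j hj => neg_pos.2 (sub_neg.2 (hβ (mem_Ioi.1 hj))))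

theorem exists_gt_eval_pos {p : ℝ[X]} (hdeg : 0 < p.degree) (hlc : 0 < p.leadingCoeff) (b : ℝ) :
    ∃ x, b < x ∧ 0 < p.eval x :=
  (((p.tendsto_atTop_of_leadingCoeff_nonneg hdeg hlc.le).eventually_gt_atTop 0).and
    (Filter.eventually_gt_atTop b)).exists.imp fun _ h => h.symm

theorem exists_lt_neg_one_pow_mul_eval_pos {p : ℝ[X]} (hdeg : 0 < p.degree)
    (hlc : 0 < p.leadingCoeff) (b : ℝ) :
    ∃ x, x < b ∧ 0 < (-1) ^ p.natDegree * p.eval x := by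
  have hsign : ((-1 : ℝ) ^ p.natDegree) ≠ 0 := by simp
  obtain ⟨x, hx, hpos⟩ := exists_gt_eval_pos (p := C ((-1) ^ p.natDegree) * p.comp (-X))
    (by rwa [degree_C_mul hsign, degree_comp_neg_X])
    (by rwa [leadingCoeff_mul, leadingCoeff_C, comp_neg_X_leadingCoeff_eq, ← mul_assoc,
      ← mul_pow, neg_one_mul, neg_neg, one_pow, one_mul]) (-b)
  exact ⟨-x, by linarith, by simpa using hpos⟩

theorem exists_interlacing_roots {n : ℕ} {p : ℝ[X]} (hdeg : p.natDegree = n + 1)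
    (hlc : 0 < p.leadingCoeff) {β : Fin n → ℝ} (hβ : StrictMono β)
    (hsign : ∀ k : Fin n, 0 < (-1) ^ (n - k : ℕ) * p.eval (β k)) :
    ∃ γ : Fin (n + 1) → ℝ, StrictMono γ ∧ (∀ k, p.IsRoot (γ k)) ∧
      ∀ k : Fin n, γ k.castSucc < β k ∧ β k < γ k.succ := by
  have hdeg' : 0 < p.degree := natDegree_pos_iff_degree_pos.1 (by omega)
  obtain ⟨M, hM⟩ := (Set.finite_range β).bddAbove
  obtain ⟨M', hM'⟩ := (Set.finite_range β).bddBelow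
  obtain ⟨U, hMU, hU⟩ := exists_gt_eval_pos hdeg' hlc M
  obtain ⟨L, hLM, hL⟩ := exists_lt_neg_one_pow_mul_eval_pos hdeg' hlc (min M' U)
  rw [hdeg] at hL
  have hβU : ∀ k, β k < U := fun k => (hM ⟨k, rfl⟩).trans_lt hMU
  have hLβ : ∀ k, L < β k := fun k => (hLM.trans_le (min_le_left _ _)).trans_le (hM' ⟨k, rfl⟩)
  -- `δ = (L, β_0, …, β_{n-1}, U)`, along which `p` alternates in sign.
  set δ : Fin (n + 2) → ℝ := Fin.cons L ((Fin.last n).insertNth U β)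
  have hδ : StrictMono δ := by
    refine Fin.strictMono_cons.2 ⟨fun j => ?_, (Fin.strictMono_insertNth_iff _ _ _).2
      ⟨hβ, fun k _ => hβU k, fun k hk => absurd hk (by simp)⟩⟩
    induction j using Fin.lastCases
    · simpa using hLM.trans_le (min_le_right _ _)
    · simp [hLβ]
  have hδsign : ∀ j : Fin (n + 2), 0 < (-1) ^ (n + 1 - j : ℕ) * p.eval (δ j) := by
    intro j
    induction j using Fin.cases with
    | zero => simpa [δ] using hL
    | succ i =>
      induction i using Fin.lastCases with
      | last => simpa [δ] using hU
      | cast k => simpa [δ] using hsign k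
  obtain ⟨γ, hγ, hroot⟩ := exists_zeros_of_alternating_sign p.continuous hδ hδsign
  refine ⟨γ, hγ, fun k => (hroot k).1, fun k => ⟨?_, ?_⟩⟩
  · simpa [δ] using (hroot k.castSucc).2.2
  · have h := (hroot k.succ).2.1
    rw [← Fin.succ_castSucc] at h
    simpa [δ] using h

end Polynomial

noncomputable def elephantT (a : ℝ) : ℕ → ℝ[X]
  | 0 => 1
  | 1 => X
  | n + 2 => X * elephantT a (n + 1) +
      C (a / ((n : ℝ) + 1)) * ((1 + X ^ 2) * (elephantT a (n + 1)).derivative)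

lemma elephantRC_succ (a : ℝ) {n : ℕ} (hn : 1 ≤ n) :
    elephantRC a (n + 1) =
      X * elephantRC a n - C ((a : ℂ) / n) * ((1 - X ^ 2) * (elephantRC a n).derivative) := by
  obtain ⟨m, rfl⟩ := Nat.exists_eq_add_of_le' hn
  simp [elephantRC]

-- At `n = 0` the junk value `a / 0 = 0` is harmless, as `T_0` is constant.
lemma elephantT_succ (a : ℝ) (n : ℕ) :
    elephantT a (n + 1) =
      X * elephantT a n + C (a / n) * ((1 + X ^ 2) * (elephantT a n).derivative) := by
  cases n with
  | zero => simp [elephantT]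
  | succ m => simp [elephantT]

lemma elephantRC_comp_I_mul_X (a : ℝ) (n : ℕ) :
    (elephantRC a n).comp (C I * X) = C (I ^ n) * (elephantT a n).map (algebraMap ℝ ℂ) := by
  rcases Nat.eq_zero_or_pos n with rfl | hn
  · simp [elephantRC, elephantT]
  induction n, hn using Nat.le_induction with
  | base => simp [elephantRC, elephantT]
  | succ n hn ih =>
    have hder : (elephantRC a n).derivative.comp (C I * X) =
        C (-I * I ^ n) * (elephantT a n).derivative.map (algebraMap ℝ ℂ) := by
      have h := congrArg derivative ih
      rw [derivative_comp, derivative_C_mul_X, derivative_C_mul, derivative_map] at h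
      calc _ = C (-I * I) * (elephantRC a n).derivative.comp (C I * X) := by simp
        _ = _ := by rw [C_mul, mul_assoc, h, ← mul_assoc, ← C_mul]
    rw [elephantRC_succ a hn, elephantT_succ]
    simp only [sub_comp, mul_comp, X_comp, C_comp, one_comp, pow_comp, ih, hder,
      Polynomial.map_add, Polynomial.map_mul, Polynomial.map_pow, Polynomial.map_one, map_X, map_C]
    have hI : (C I * X : ℂ[X]) ^ 2 = -X ^ 2 := by simp [mul_pow, ← C_pow]
    simp only [hI, coe_algebraMap, map_mul, map_neg, map_pow, ofReal_div, ofReal_natCast]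
    ring

lemma elephantS_eq_map (a : ℝ) (n : ℕ) :
    elephantS a n = (elephantT a n).map (algebraMap ℝ ℂ) := by
  rw [elephantS, elephantRC_comp_I_mul_X, ← mul_assoc, ← C_mul, ← mul_pow]
  simp

lemma elephantT_natDegree_le (a : ℝ) (n : ℕ) : (elephantT a n).natDegree ≤ n := by
  induction n with
  | zero => simp [elephantT]
  | succ n ih =>
    rcases Nat.eq_zero_or_pos n with rfl | hn
    · simp [elephantT]
    have hder : (elephantT a n).derivative.natDegree ≤ n - 1 :=
      (natDegree_derivative_le _).trans (Nat.sub_le_sub_right ih 1)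
    have hsq : ((1 : ℝ[X]) + X ^ 2).natDegree ≤ 2 :=
      natDegree_add_le_of_degree_le (by simp) (natDegree_X_pow_le 2)
    rw [elephantT_succ]
    refine natDegree_add_le_of_degree_le ((natDegree_mul_le_of_le natDegree_X_le ih).trans
      (by omega)) ((natDegree_C_mul_le _ _).trans ((natDegree_mul_le_of_le hsq hder).trans
      (by omega)))

lemma elephantT_coeff_self (a : ℝ) (n : ℕ) : (elephantT a n).coeff n = (a + 1) ^ (n - 1) := by
  induction n with
  | zero => simp [elephantT]
  | succ n ih =>
    rcases Nat.eq_zero_or_pos n with rfl | hn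
    · simp [elephantT]
    have hder_top : (elephantT a n).derivative.coeff (n + 1) = 0 :=
      coeff_eq_zero_of_natDegree_lt ((natDegree_derivative_le _).trans_lt
        (by have := elephantT_natDegree_le a n; omega))
    have hder_lead : (elephantT a n).derivative.coeff (n - 1) = n * (a + 1) ^ (n - 1) := by
      rw [coeff_derivative, Nat.sub_add_cancel hn, ih, Nat.cast_sub hn]
      ring
    rw [elephantT_succ, coeff_add, coeff_X_mul, coeff_C_mul, add_mul, one_mul, coeff_add,
      coeff_X_pow_mul', if_pos (by omega), show n + 1 - 2 = n - 1 by omega, hder_top, hder_lead,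
      ih, zero_add, Nat.add_sub_cancel, ← Nat.sub_add_cancel hn, pow_succ, Nat.add_sub_cancel]
    field_simp
    ring

lemma elephantT_coeff_self_ne_zero {a : ℝ} (ha : a ≠ -1) (n : ℕ) :
    (elephantT a n).coeff n ≠ 0 := by
  rw [elephantT_coeff_self]
  exact pow_ne_zero _ fun h => ha (eq_neg_of_add_eq_zero_left h)

lemma elephantT_natDegree {a : ℝ} (ha : a ≠ -1) (n : ℕ) : (elephantT a n).natDegree = n :=
  natDegree_eq_of_le_of_coeff_ne_zero (elephantT_natDegree_le a n)
    (elephantT_coeff_self_ne_zero ha n)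

lemma elephantT_leadingCoeff {a : ℝ} (ha : a ≠ -1) (n : ℕ) :
    (elephantT a n).leadingCoeff = (a + 1) ^ (n - 1) := by
  rw [leadingCoeff, elephantT_natDegree ha, elephantT_coeff_self]

lemma elephantT_succ_sign_at_roots {a : ℝ} (ha : a ∈ Set.Ioo (-1) 0) {n : ℕ}
    {β : Fin n → ℝ} (hβ : StrictMono β) (hroot : ∀ k, (elephantT a n).IsRoot (β k)) (k : Fin n) :
    0 < (-1) ^ (n - k : ℕ) * (elephantT a (n + 1)).eval (β k) := by
  have hfac := eq_C_leadingCoeff_mul_nodal (elephantT_natDegree ha.1.ne' n) hβ.injective hroot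
  have heval : (elephantT a (n + 1)).eval (β k) =
      a / n * (1 + β k ^ 2) * (elephantT a n).derivative.eval (β k) := by
    rw [elephantT_succ]
    simp [(hroot k).eq_zero, mul_assoc]
  have hpow : (-1 : ℝ) ^ (n - k : ℕ) = -(-1) ^ (n - 1 - k : ℕ) := by
    rw [show n - k = n - 1 - k + 1 by omega, pow_succ, mul_neg_one]
  have hcoef : 0 < -(a / n) * (1 + β k ^ 2) * (a + 1) ^ (n - 1) := by
    have hn : 0 < (n : ℝ) := by exact_mod_cast k.pos
    have ha1 : 0 < a + 1 := by linarith [ha.1]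
    exact mul_pos (mul_pos (neg_pos.2 (div_neg_of_neg_of_pos ha.2 hn)) (by positivity))
      (pow_pos ha1 _)
  rw [heval, hfac, derivative_C_mul, eval_mul, eval_C, elephantT_leadingCoeff ha.1.ne', hpow]
  exact (mul_pos hcoef (neg_one_pow_mul_eval_derivative_nodal_pos hβ k)).trans_eq (by ring)

lemma elephantT_succ_interlacing {a : ℝ} (ha : a ∈ Set.Ioo (-1) 0) {n : ℕ}
    {β : Fin n → ℝ} (hβ : StrictMono β) (hroot : ∀ k, (elephantT a n).IsRoot (β k)) :
    ∃ γ : Fin (n + 1) → ℝ, StrictMono γ ∧ (∀ k, (elephantT a (n + 1)).IsRoot (γ k)) ∧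
      ∀ k : Fin n, γ k.castSucc < β k ∧ β k < γ k.succ :=
  exists_interlacing_roots (elephantT_natDegree ha.1.ne' _)
    (by rw [elephantT_leadingCoeff ha.1.ne']; exact pow_pos (by linarith [ha.1]) _) hβ
    (elephantT_succ_sign_at_roots ha hβ hroot)

lemma elephantT_exists_roots {a : ℝ} (ha : a ∈ Set.Ioo (-1) 0) (n : ℕ) :
    ∃ β : Fin n → ℝ, StrictMono β ∧ ∀ k, (elephantT a n).IsRoot (β k) := by
  induction n with
  | zero => exact ⟨Fin.elim0, fun i => i.elim0, fun k => k.elim0⟩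
  | succ n ih =>
    obtain ⟨β, hβ, hroot⟩ := ih
    obtain ⟨γ, hγ, hγroot, -⟩ := elephantT_succ_interlacing ha hβ hroot
    exact ⟨γ, hγ, hγroot⟩

lemma elephantS_roots {a : ℝ} (ha : a ≠ -1) {n : ℕ} {β : Fin n → ℝ}
    (hβ : Function.Injective β) (hroot : ∀ k, (elephantT a n).IsRoot (β k)) :
    (∀ k, (elephantS a n).eval (β k : ℂ) = 0) ∧
      (∀ z : ℂ, (elephantS a n).eval z = 0 → ∃ k, z = (β k : ℂ)) ∧
      ∀ k, (elephantS a n).derivative.eval (β k : ℂ) ≠ 0 := by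
  have hdeg : (elephantS a n).natDegree = n := by
    rw [elephantS_eq_map, natDegree_map, elephantT_natDegree ha]
  have hS0 : elephantS a n ≠ 0 := by
    rw [elephantS_eq_map, Polynomial.map_ne_zero_iff (algebraMap ℝ ℂ).injective]
    exact fun h => elephantT_coeff_self_ne_zero ha n (by simp [h])
  have hβS : ∀ k, (elephantS a n).IsRoot (β k : ℂ) := fun k => by
    simpa [elephantS_eq_map] using (hroot k).map (f := algebraMap ℝ ℂ)
  have hinj : Function.Injective fun k => (β k : ℂ) := Complex.ofReal_injective.comp hβ
  exact ⟨hβS, fun z hz => exists_eq_of_isRoot_of_injective hdeg hS0 hinj hβS hz,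
    eval_derivative_ne_zero_of_injective hdeg hS0 hinj hβS⟩

theorem stmt_16_general (a : ℝ) (ha : a ∈ Set.Ioo (-1 : ℝ) 0) (n : ℕ) :
    ∃ (β : Fin n → ℝ) (γ : Fin (n + 1) → ℝ),
      StrictMono β ∧ StrictMono γ ∧
      (∀ k, (elephantS a n).eval (β k : ℂ) = 0) ∧
      (∀ k, (elephantS a (n + 1)).eval (γ k : ℂ) = 0) ∧
      (∀ z : ℂ, (elephantS a n).eval z = 0 → ∃ k, z = (β k : ℂ)) ∧
      (∀ z : ℂ, (elephantS a (n + 1)).eval z = 0 → ∃ k, z = (γ k : ℂ)) ∧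
      (∀ k, (elephantS a n).derivative.eval (β k : ℂ) ≠ 0) ∧
      (∀ k, (elephantS a (n + 1)).derivative.eval (γ k : ℂ) ≠ 0) ∧
      (∀ k : Fin n, γ k.castSucc < β k ∧ β k < γ k.succ) := by
  obtain ⟨β, hβ, hβroot⟩ := elephantT_exists_roots ha n
  obtain ⟨γ, hγ, hγroot, hinterlace⟩ := elephantT_succ_interlacing ha hβ hβroot
  obtain ⟨hβS, hβonly, hβsimple⟩ := elephantS_roots ha.1.ne' hβ.injective hβroot
  obtain ⟨hγS, hγonly, hγsimple⟩ := elephantS_roots ha.1.ne' hγ.injective hγroot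
  exact ⟨β, γ, hβ, hγ, hβS, hγS, hβonly, hγonly, hβsimple, hγsimple, hinterlace⟩

theorem stmt_16 (a : ℝ) (ha : a ∈ Set.Ioo (-1 : ℝ) 0) (n : ℕ) (hn : 1 ≤ n) :
    ∃ (β : Fin n → ℝ) (γ : Fin (n + 1) → ℝ),
      StrictMono β ∧ StrictMono γ ∧
      (∀ k, (elephantS a n).eval (β k : ℂ) = 0) ∧
      (∀ k, (elephantS a (n + 1)).eval (γ k : ℂ) = 0) ∧
      (∀ z : ℂ, (elephantS a n).eval z = 0 → ∃ k, z = (β k : ℂ)) ∧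
      (∀ z : ℂ, (elephantS a (n + 1)).eval z = 0 → ∃ k, z = (γ k : ℂ)) ∧
      (∀ k, (elephantS a n).derivative.eval (β k : ℂ) ≠ 0) ∧
      (∀ k, (elephantS a (n + 1)).derivative.eval (γ k : ℂ) ≠ 0) ∧
      (∀ k : Fin n, γ k.castSucc < β k ∧ β k < γ k.succ) :=
  stmt_16_general a ha n
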